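/- arXiv:2112.03767 — 7 statements merged into one kernel-verified Lean document; each statement's English description precedes it below -/
import Mathlib

section
/- For every integer n ≥ 1, the maximal transition probability of simple random walk on Z^2 satisfies sup_{x ∈ Z^2} P_0(S_n = x) ≤ 2/(π n). -/
/-!
In the rotated coordinates `x₁ + x₂` and `x₁ - x₂` every step of the walk changes both
coordinates by `±1`, so a path is determined by the two sets of its up-steps, and the number
of paths ending at `x` is at most the square of the largest binomial coefficient
`n.choose (n / 2)`. Wallis' product bounds `(2m).choose m ^ 2 / 16 ^ m` by `1 / (π m)`.
-/

open Finset

/-- The four unit steps of the planar simple random walk. -/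
def dir : Fin 4 → ℤ × ℤ := ![(1,0),(-1,0),(0,1),(0,-1)]

/-- `p n x` is the probability that the simple random walk on `ℤ²` started at `0`
is at `x` at time `n`. -/
noncomputable def p (n : ℕ) (x : ℤ × ℤ) : ℝ :=
  ((Finset.univ.filter (fun m : Fin n → Fin 4 => (∑ i, dir (m i)) = x)).card : ℝ) / 4 ^ n

open Real
open scoped Nat

theorem card_filter_comp_card_le_choose_half {α β : Type*} [Fintype α] [DecidableEq α]
    [DecidableEq β] {f : ℕ → β} (hf : f.Injective) (c : β) :
    #{S : Finset α | f #S = c} ≤ (Fintype.card α).choose (Fintype.card α / 2) := by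
  by_cases hc : ∃ k, f k = c
  · obtain ⟨k, rfl⟩ := hc
    simp only [hf.eq_iff, univ_filter_card_eq, card_powersetCard, card_univ]
    exact Nat.choose_le_middle k _
  · push Not at hc
    simp [hc]

theorem sum_eq_two_mul_card_sub_of_eq_one_or_neg_one {ι : Type*} [Fintype ι] {g : ι → ℤ}
    (hg : ∀ i, g i = 1 ∨ g i = -1) : ∑ i, g i = 2 * #{i | g i = 1} - Fintype.card ι := by
  have h : ∀ i, g i = 2 * (if g i = 1 then 1 else 0) - 1 := fun i => by
    rcases hg i with h | h <;> simp [h]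
  rw [sum_congr rfl fun i _ => h i, sum_sub_distrib, ← mul_sum, sum_boole]
  simp

theorem card_filter_sum_dir_eq_le (n : ℕ) (x : ℤ × ℤ) :
    #{m : Fin n → Fin 4 | ∑ i, dir (m i) = x} ≤ n.choose (n / 2) ^ 2 := by
  let u (d : Fin 4) : ℤ := (dir d).1 + (dir d).2
  let v (d : Fin 4) : ℤ := (dir d).1 - (dir d).2
  have hu : ∀ d, u d = 1 ∨ u d = -1 := by decide
  have hv : ∀ d, v d = 1 ∨ v d = -1 := by decide
  have huv : ∀ d d', (u d = 1 ↔ u d' = 1) → (v d = 1 ↔ v d' = 1) → d = d' := by decide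
  let f (k : ℕ) : ℤ := 2 * k - n
  have hf : f.Injective := fun k l h => by simpa [f] using h
  let ends (c : ℤ) : Finset (Finset (Fin n)) := {S | f #S = c}
  calc #{m : Fin n → Fin 4 | ∑ i, dir (m i) = x}
      ≤ #(ends (x.1 + x.2) ×ˢ ends (x.1 - x.2)) := by
        refine card_le_card_of_injOn
          (fun m => (({i | u (m i) = 1} : Finset _), ({i | v (m i) = 1} : Finset _))) ?_ ?_
        · intro m hm
          have hsign (g : Fin 4 → ℤ) (hg : ∀ d, g d = 1 ∨ g d = -1) :
              f #{i | g (m i) = 1} = ∑ i, g (m i) := by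
            simpa using (sum_eq_two_mul_card_sub_of_eq_one_or_neg_one fun i => hg (m i)).symm
          simp only [coe_filter, mem_univ, true_and, Set.mem_ofPred_eq] at hm
          subst hm
          simp only [coe_product, Set.mem_prod, coe_filter, mem_univ, true_and, Set.mem_ofPred_eq,
            ends, hsign u hu, hsign v hv, u, v, sum_add_distrib, sum_sub_distrib, ← Prod.fst_sum,
            ← Prod.snd_sum]
        · intro m _ m' _ h
          simp only [Prod.mk.injEq, Finset.ext_iff, mem_filter, mem_univ, true_and] at h
          funext i
          exact huv _ _ (h.1 i) (h.2 i)
    _ ≤ n.choose (n / 2) ^ 2 := by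
        rw [card_product, sq]
        have := card_filter_comp_card_le_choose_half (α := Fin n) hf
        simp only [Fintype.card_fin] at this
        exact Nat.mul_le_mul (this _) (this _)

theorem Nat.centralBinom_mul_factorial_mul_factorial (n : ℕ) :
    n.centralBinom * n ! * n ! = (2 * n)! := by
  simpa [two_mul, Nat.centralBinom_eq_two_mul_choose] using
    Nat.choose_mul_factorial_mul_factorial (Nat.le_add_left n n)

theorem Nat.centralBinom_sq_div_eq_inv_W (n : ℕ) :
    (n.centralBinom : ℝ) ^ 2 / 16 ^ n = ((2 * n + 1) * Wallis.W n)⁻¹ := by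
  have h : (n.centralBinom : ℝ) * n ! * n ! = (2 * n)! := by
    exact_mod_cast n.centralBinom_mul_factorial_mul_factorial
  have : (n.centralBinom : ℝ) ≠ 0 := by exact_mod_cast n.centralBinom_ne_zero
  rw [Wallis.W_eq_factorial_ratio, ← h, pow_mul]
  field_simp
  norm_num

theorem Real.Wallis.pi_mul_le_W (n : ℕ) : π * n ≤ (2 * n + 1) * W n := by
  have h : (n : ℝ) ≤ (2 * n + 1) ^ 2 / (4 * n + 4) := by
    rw [le_div_iff₀ (by positivity)]; nlinarith
  calc π * n ≤ π * ((2 * n + 1) ^ 2 / (4 * n + 4)) := by gcongr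
    _ = (2 * n + 1) * ((2 * n + 1) / (2 * n + 2) * (π / 2)) := by field_simp; ring
    _ ≤ (2 * n + 1) * W n := by gcongr; exact le_W n

theorem Nat.centralBinom_sq_div_le {n : ℕ} (hn : n ≠ 0) :
    (n.centralBinom : ℝ) ^ 2 / 16 ^ n ≤ (π * n)⁻¹ := by
  rw [n.centralBinom_sq_div_eq_inv_W]
  exact inv_anti₀ (by positivity) (Wallis.pi_mul_le_W n)

theorem Nat.centralBinom_succ_eq_two_mul_choose (m : ℕ) :
    (m + 1).centralBinom = 2 * (2 * m + 1).choose m := by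
  rw [Nat.centralBinom_eq_two_mul_choose, show 2 * (m + 1) = 2 * m + 1 + 1 by ring,
    Nat.choose_succ_succ', Nat.choose_symm_half, ← two_mul]

theorem Nat.choose_half_sq_div_le {n : ℕ} (hn : n ≠ 0) :
    (n.choose (n / 2) : ℝ) ^ 2 / 4 ^ n ≤ 2 / (π * n) := by
  obtain ⟨m, rfl | rfl⟩ := n.even_or_odd'
  · have hm : m ≠ 0 := by omega
    calc ((2 * m).choose (2 * m / 2) : ℝ) ^ 2 / 4 ^ (2 * m)
        = (m.centralBinom : ℝ) ^ 2 / 16 ^ m := by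
          rw [Nat.mul_div_cancel_left m two_pos, Nat.centralBinom_eq_two_mul_choose, pow_mul]
          norm_num
      _ ≤ (π * m)⁻¹ := Nat.centralBinom_sq_div_le hm
      _ = 2 / (π * (2 * m : ℕ)) := by push_cast; field_simp
  · have hm : (2 * m + 1) / 2 = m := by omega
    calc ((2 * m + 1).choose ((2 * m + 1) / 2) : ℝ) ^ 2 / 4 ^ (2 * m + 1)
        = ((m + 1).centralBinom : ℝ) ^ 2 / 16 ^ (m + 1) := by
          rw [hm, Nat.centralBinom_succ_eq_two_mul_choose, show (16 : ℝ) = 4 ^ 2 by norm_num,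
            ← pow_mul]
          push_cast
          ring
      _ ≤ (π * (m + 1 : ℕ))⁻¹ := Nat.centralBinom_sq_div_le m.succ_ne_zero
      _ ≤ 2 / (π * (2 * m + 1 : ℕ)) := by
          rw [inv_eq_one_div, div_le_div_iff₀ (by positivity) (by positivity)]
          push_cast
          nlinarith [pi_pos]

/-- For every `n ≥ 1` and every `x ∈ ℤ²`, `p n x ≤ 2/(π n)`. -/
theorem pnstar_le (n : ℕ) (hn : 1 ≤ n) (x : ℤ × ℤ) :
    p n x ≤ 2 / (Real.pi * n) :=
  calc p n x ≤ (n.choose (n / 2) ^ 2 : ℕ) / 4 ^ n := by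
        unfold p; gcongr; exact card_filter_sum_dir_eq_le n x
    _ ≤ 2 / (Real.pi * n) := by push_cast; exact Nat.choose_half_sq_div_le (by omega)
end

section
/- The sequence b_n = √(2n+1) · 2^{-(2n+1)} · binomial(2n+1, n) is non-decreasing in n ≥ 0. -/
/-! The ratio of consecutive terms is
`b (n+1) / b n = (2n+3) √(2n+3) / (2(n+2) √(2n+1))`, by the binomial recursion
`(n+2) C(2n+3, n+1) = 2(2n+3) C(2n+1, n)`. With `y = 2n+1` this is at least `1` because
`(y+3)² y ≤ (y+2)³`, the difference being `3y + 8`. -/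

theorem Nat.two_mul_choose_odd_central (n : ℕ) :
    2 * (2 * n + 1).choose n = (2 * n + 2).choose (n + 1) := by
  rw [Nat.choose_succ_succ', Nat.choose_symm_half]
  ring

theorem Nat.add_two_mul_choose_odd_central_succ (n : ℕ) :
    (n + 2) * (2 * n + 3).choose (n + 1) = 2 * (2 * n + 3) * (2 * n + 1).choose n := by
  have hsymm := Nat.choose_symm_half (n + 1)
  rw [show 2 * (n + 1) + 1 = 2 * n + 3 by ring] at hsymm
  calc (n + 2) * (2 * n + 3).choose (n + 1)
      = (2 * n + 3).choose (n + 2) * (n + 2) := by rw [hsymm, mul_comm]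
    _ = (2 * n + 3) * (2 * n + 2).choose (n + 1) := (Nat.add_one_mul_choose_eq _ _).symm
    _ = 2 * (2 * n + 3) * (2 * n + 1).choose n := by
        rw [← Nat.two_mul_choose_odd_central]
        ring

theorem Real.add_three_mul_sqrt_le (y : ℝ) (hy : 0 ≤ y) :
    (y + 3) * √y ≤ (y + 2) * √(y + 2) := by
  refine (pow_le_pow_iff_left₀ (by positivity) (by positivity) two_ne_zero).mp ?_
  rw [mul_pow, mul_pow, Real.sq_sqrt hy, Real.sq_sqrt (by positivity)]
  nlinarith

/-- The sequence `b_n = √(2n+1) · 2^{-(2n+1)} · C(2n+1, n)` is non-decreasing for `n ≥ 0`. -/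
theorem odd_binom_seq_monotone (n : ℕ) :
    Real.sqrt (2 * n + 1) * (Nat.choose (2 * n + 1) n : ℝ) / 2 ^ (2 * n + 1) ≤
      Real.sqrt (2 * (n + 1) + 1) * (Nat.choose (2 * (n + 1) + 1) (n + 1) : ℝ)
        / 2 ^ (2 * (n + 1) + 1) := by
  have hrec : ((n : ℝ) + 2) * (Nat.choose (2 * (n + 1) + 1) (n + 1) : ℝ)
      = 2 * (2 * n + 3) * (Nat.choose (2 * n + 1) n : ℝ) := by
    exact_mod_cast Nat.add_two_mul_choose_odd_central_succ n
  have hpow : (2 : ℝ) ^ (2 * (n + 1) + 1) = 4 * 2 ^ (2 * n + 1) := by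
    rw [show 2 * (n + 1) + 1 = 2 * n + 1 + 2 by ring, pow_add]
    ring
  set c : ℝ := (Nat.choose (2 * n + 1) n : ℝ)
  set c' : ℝ := (Nat.choose (2 * (n + 1) + 1) (n + 1) : ℝ)
  rw [show (2 * ((n : ℝ) + 1) + 1) = 2 * n + 1 + 2 by ring, hpow]
  refine le_of_mul_le_mul_left ?_ (by positivity : (0 : ℝ) < 2 * (n + 2))
  calc 2 * ((n : ℝ) + 2) * (√(2 * n + 1) * c / 2 ^ (2 * n + 1))
      = c / 2 ^ (2 * n + 1) * ((2 * n + 1 + 3) * √(2 * n + 1)) := by ring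
    _ ≤ c / 2 ^ (2 * n + 1) * ((2 * n + 1 + 2) * √(2 * n + 1 + 2)) :=
        mul_le_mul_of_nonneg_left (Real.add_three_mul_sqrt_le _ (by positivity)) (by positivity)
    _ = 2 * (n + 2) * (√(2 * n + 1 + 2) * c' / (4 * 2 ^ (2 * n + 1))) := by
        linear_combination -(√(2 * n + 1 + 2) / (2 * 2 ^ (2 * n + 1))) * hrec
end

section
/- Let (Y_n) be a Markov chain on a countable state space E and f : E → [0,1]. Fix k ∈ N. If η₁ := sup_{x∈E} E_x[Σ_{n=1}^k f(Y_n)] < 1, then sup_{x∈E} E_x[exp(Σ_{n=1}^k f(Y_n))] ≤ 1/(1 − e·η₁), provided e·η₁ < 1. -/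
/-!
Pass to the `ℝ≥0∞`-valued path expectation, where no summability side conditions arise, and put
`h = e·f ≥ e^f - 1`, `η = e·η₁`, `M = (1 - η)⁻¹`, `u_j(x) = E_x[∏_{n ≤ j} (1 + h(Y_n))]` and
`B_j(x) = E_x[∑_{n ≤ j} h(Y_n)]`. Conditioning on the first step gives
`u_{j+1}(x) = ∑_z K(x,z) (1 + h z) u_j(z)` and `B_{j+1}(x) = ∑_z K(x,z) (h z + B_j(z))`.
Since `B_j` increases with `j`, the hypothesis gives `B_j ≤ η` for all `j ≤ k`, and then the bound
`u_j ≤ 1 + M B_j` passes from `j` to `j + 1` because `1 + M η = M`. At `j = k` it reads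
`u_k ≤ 1 + M η = M`.
-/

open Finset

/-- Expectation, for the Markov chain on `E` with transition kernel `K` started at `x`,
of a functional `F` of the first `k` steps `(Y_1, …, Y_k)`. -/
noncomputable def markovExp {E : Type*} (K : E → E → ℝ) (k : ℕ) (x : E)
    (F : (Fin k → E) → ℝ) : ℝ :=
  ∑' y : Fin k → E, (∏ i : Fin k, K ((Fin.cons x y : Fin (k+1) → E) i.castSucc) (y i)) * F y

open scoped ENNReal

lemma ENNReal.one_add_mul_inv_one_sub (a : ℝ≥0∞) : 1 + a * (1 - a)⁻¹ = (1 - a)⁻¹ := by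
  rw [← ENNReal.tsum_geometric_add_one]
  conv_rhs => rw [← ENNReal.tsum_geometric, tsum_eq_zero_add' ENNReal.summable, pow_zero]

lemma Real.exp_le_one_add_exp_one_mul {t : ℝ} (h0 : 0 ≤ t) (h1 : t ≤ 1) :
    Real.exp t ≤ 1 + Real.exp 1 * t := by
  have h := convexOn_exp.2 (Set.mem_univ 0) (Set.mem_univ 1) (sub_nonneg.2 h1) h0 (by ring)
  simp only [smul_eq_mul, mul_zero, mul_one, zero_add, Real.exp_zero] at h
  nlinarith [Real.exp_pos 1]

lemma ENNReal.ofReal_exp_sum_le_prod_one_add {ι : Type*} (s : Finset ι) {t : ι → ℝ}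
    (ht : ∀ i, t i ∈ Set.Icc (0 : ℝ) 1) :
    ENNReal.ofReal (Real.exp (∑ i ∈ s, t i)) ≤ ∏ i ∈ s, (1 + ENNReal.ofReal (Real.exp 1 * t i)) := by
  rw [Real.exp_sum, ENNReal.ofReal_prod_of_nonneg fun i _ => (Real.exp_pos _).le]
  refine prod_le_prod' fun i _ => ?_
  rw [← ENNReal.ofReal_one, ← ENNReal.ofReal_add zero_le_one
    (mul_nonneg (Real.exp_pos 1).le (ht i).1)]
  exact ENNReal.ofReal_le_ofReal (Real.exp_le_one_add_exp_one_mul (ht i).1 (ht i).2)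

section MarkovLExp

variable {E : Type*} (P : E → E → ℝ≥0∞)

noncomputable def markovWeight (k : ℕ) (x : E) (y : Fin k → E) : ℝ≥0∞ :=
  ∏ i : Fin k, P ((Fin.cons x y : Fin (k+1) → E) i.castSucc) (y i)

noncomputable def markovLExp (k : ℕ) (x : E) (F : (Fin k → E) → ℝ≥0∞) : ℝ≥0∞ :=
  ∑' y, markovWeight P k x y * F y

lemma markovWeight_cons (k : ℕ) (x z : E) (t : Fin k → E) :
    markovWeight P (k+1) x (Fin.cons z t) = P x z * markovWeight P k z t := by
  rw [markovWeight, Fin.prod_univ_succ]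
  rfl

lemma markovLExp_zero (x : E) (F : (Fin 0 → E) → ℝ≥0∞) :
    markovLExp P 0 x F = F Fin.elim0 := by
  rw [markovLExp, tsum_eq_single Fin.elim0 fun y hy => (hy (Subsingleton.elim _ _)).elim]
  simp [markovWeight]

lemma markovLExp_succ (k : ℕ) (x : E) (F : (Fin (k+1) → E) → ℝ≥0∞) :
    markovLExp P (k+1) x F = ∑' z, P x z * markovLExp P k z (fun t => F (Fin.cons z t)) := by
  rw [markovLExp, ← (Fin.consEquiv fun _ => E).tsum_eq, ENNReal.tsum_prod']
  refine tsum_congr fun z => ?_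
  rw [markovLExp, ← ENNReal.tsum_mul_left]
  refine tsum_congr fun t => ?_
  change markovWeight P (k+1) x (Fin.cons z t) * F (Fin.cons z t) = _
  rw [markovWeight_cons, mul_assoc]

lemma markovLExp_mono (k : ℕ) (x : E) {F G : (Fin k → E) → ℝ≥0∞} (h : F ≤ G) :
    markovLExp P k x F ≤ markovLExp P k x G :=
  ENNReal.tsum_le_tsum fun y => by gcongr; exact h y

lemma markovLExp_add (k : ℕ) (x : E) (F G : (Fin k → E) → ℝ≥0∞) :
    markovLExp P k x (fun y => F y + G y) = markovLExp P k x F + markovLExp P k x G := by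
  simp only [markovLExp, mul_add, ENNReal.tsum_add]

lemma markovLExp_const_mul (k : ℕ) (x : E) (c : ℝ≥0∞) (F : (Fin k → E) → ℝ≥0∞) :
    markovLExp P k x (fun y => c * F y) = c * markovLExp P k x F := by
  simp only [markovLExp, ← ENNReal.tsum_mul_left, mul_left_comm]

variable {P}

lemma markovLExp_const (hP : ∀ x, ∑' y, P x y = 1) (k : ℕ) (x : E) (c : ℝ≥0∞) :
    markovLExp P k x (fun _ => c) = c := by
  induction k generalizing x with
  | zero => rw [markovLExp_zero]
  | succ k ih => simp only [markovLExp_succ, ih, ENNReal.tsum_mul_right, hP, one_mul]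

lemma markovLExp_prod_succ (k : ℕ) (x : E) (φ : E → ℝ≥0∞) :
    markovLExp P (k+1) x (fun y => ∏ n, φ (y n))
      = ∑' z, P x z * (φ z * markovLExp P k z (fun y => ∏ n, φ (y n))) := by
  simp only [markovLExp_succ, Fin.prod_univ_succ, Fin.cons_zero, Fin.cons_succ,
    markovLExp_const_mul]

lemma markovLExp_sum_succ (hP : ∀ x, ∑' y, P x y = 1) (k : ℕ) (x : E) (h : E → ℝ≥0∞) :
    markovLExp P (k+1) x (fun y => ∑ n, h (y n))
      = ∑' z, P x z * (h z + markovLExp P k z (fun y => ∑ n, h (y n))) := by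
  simp only [markovLExp_succ, Fin.sum_univ_succ, Fin.cons_zero, Fin.cons_succ]
  refine tsum_congr fun z => ?_
  rw [markovLExp_add, markovLExp_const hP]

lemma monotone_markovLExp_sum (hP : ∀ x, ∑' y, P x y = 1) (h : E → ℝ≥0∞) :
    Monotone fun k x => markovLExp P k x (fun y => ∑ n, h (y n)) := by
  refine monotone_nat_of_le_succ fun k => ?_
  induction k with
  | zero => intro x; simp [markovLExp_zero]
  | succ k ih =>
    intro x
    beta_reduce
    rw [markovLExp_sum_succ hP k, markovLExp_sum_succ hP (k + 1)]
    exact ENNReal.tsum_le_tsum fun z => by gcongr; exact ih z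

lemma markovLExp_prod_one_add_le_one_add_mul (hP : ∀ x, ∑' y, P x y = 1) (h : E → ℝ≥0∞)
    {k : ℕ} {η : ℝ≥0∞} (hη : ∀ x, markovLExp P k x (fun y => ∑ n, h (y n)) ≤ η) (x : E) :
    markovLExp P k x (fun y => ∏ n, (1 + h (y n)))
      ≤ 1 + (1 - η)⁻¹ * markovLExp P k x (fun y => ∑ n, h (y n)) := by
  set M := (1 - η)⁻¹
  induction k generalizing x with
  | zero => simp [markovLExp_zero]
  | succ k ih =>
    set B := fun z => markovLExp P k z (fun y => ∑ n, h (y n))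
    have hBη z : B z ≤ η := (monotone_markovLExp_sum hP h k.le_succ z).trans (hη z)
    have hB z : 1 + M * B z ≤ M := calc
      1 + M * B z ≤ 1 + M * η := by gcongr; exact hBη z
      _ = M := by rw [mul_comm, ENNReal.one_add_mul_inv_one_sub]
    have hstep z : (1 + h z) * markovLExp P k z (fun y => ∏ n, (1 + h (y n)))
        ≤ 1 + M * (h z + B z) := calc
      _ ≤ (1 + h z) * (1 + M * B z) := by gcongr; exact ih hBη z
      _ = (1 + M * B z) + h z * (1 + M * B z) := by ring
      _ ≤ (1 + M * B z) + h z * M := by gcongr; exact hB z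
      _ = 1 + M * (h z + B z) := by ring
    rw [markovLExp_prod_succ k x (fun z => 1 + h z), markovLExp_sum_succ hP]
    calc _ ≤ ∑' z, P x z * (1 + M * (h z + B z)) :=
          ENNReal.tsum_le_tsum fun z => by gcongr; exact hstep z
      _ = _ := by
        simp only [mul_add, mul_one, ENNReal.tsum_add, hP, mul_left_comm (P x _) M,
          ENNReal.tsum_mul_left]
        rfl

-- The discrete Khas'minskii lemma, stated for `h = e^f - 1`.
theorem markovLExp_prod_one_add_le (hP : ∀ x, ∑' y, P x y = 1) (h : E → ℝ≥0∞)
    {k : ℕ} {η : ℝ≥0∞} (hη : ∀ x, markovLExp P k x (fun y => ∑ n, h (y n)) ≤ η) (x : E) :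
    markovLExp P k x (fun y => ∏ n, (1 + h (y n))) ≤ (1 - η)⁻¹ := calc
  _ ≤ 1 + (1 - η)⁻¹ * markovLExp P k x (fun y => ∑ n, h (y n)) :=
    markovLExp_prod_one_add_le_one_add_mul hP h hη x
  _ ≤ 1 + (1 - η)⁻¹ * η := by gcongr; exact hη x
  _ = (1 - η)⁻¹ := by rw [mul_comm, ENNReal.one_add_mul_inv_one_sub]

end MarkovLExp

lemma ENNReal.tsum_ofReal_eq_one {α : Type*} {p : α → ℝ} (hp0 : ∀ a, 0 ≤ p a)
    (hp1 : ∑' a, p a = 1) : ∑' a, ENNReal.ofReal (p a) = 1 := by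
  have hp : Summable p := by
    by_contra hp
    rw [tsum_eq_zero_of_not_summable hp] at hp1
    exact zero_ne_one hp1
  rw [← ENNReal.ofReal_tsum_of_nonneg hp0 hp, hp1, ENNReal.ofReal_one]

lemma ENNReal.inv_one_sub_ofReal {p : ℝ} (h0 : 0 ≤ p) (h1 : p < 1) :
    (1 - ENNReal.ofReal p)⁻¹ = ENNReal.ofReal (1 / (1 - p)) := by
  rw [← ENNReal.ofReal_one, ← ENNReal.ofReal_sub 1 h0, ← ENNReal.ofReal_inv_of_pos (by linarith),
    one_div]

section MarkovExp

variable {E : Type*} {K : E → E → ℝ}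

lemma markovExp_nonneg (hK0 : ∀ x y, 0 ≤ K x y) {k : ℕ} (x : E) {F : (Fin k → E) → ℝ}
    (hF : ∀ y, 0 ≤ F y) : 0 ≤ markovExp K k x F :=
  tsum_nonneg fun y => mul_nonneg (prod_nonneg fun _ _ => hK0 _ _) (hF y)

lemma ofReal_markovExp (hK0 : ∀ x y, 0 ≤ K x y) (hK1 : ∀ x, ∑' y, K x y = 1) {k : ℕ} (x : E)
    {F : (Fin k → E) → ℝ} (hF0 : ∀ y, 0 ≤ F y) {C : ℝ} (hFC : ∀ y, F y ≤ C) :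
    ENNReal.ofReal (markovExp K k x F)
      = markovLExp (fun x y => ENNReal.ofReal (K x y)) k x (fun y => ENNReal.ofReal (F y)) := by
  set P : E → E → ℝ≥0∞ := fun x y => ENNReal.ofReal (K x y)
  set w : (Fin k → E) → ℝ :=
    fun y => ∏ i : Fin k, K ((Fin.cons x y : Fin (k+1) → E) i.castSucc) (y i)
  have hw0 y : 0 ≤ w y := prod_nonneg fun _ _ => hK0 _ _
  have hwP y : markovWeight P k x y = ENNReal.ofReal (w y) :=
    (ENNReal.ofReal_prod_of_nonneg fun i _ => hK0 _ _).symm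
  have hw1 : ∑' y, markovWeight P k x y = 1 := by
    simpa [markovLExp] using
      markovLExp_const (fun x => ENNReal.tsum_ofReal_eq_one (hK0 x) (hK1 x)) k x 1
  have hw : Summable w := by
    refine (ENNReal.summable_toReal (hw1 ▸ ENNReal.one_ne_top)).congr fun y => ?_
    rw [hwP, ENNReal.toReal_ofReal (hw0 y)]
  have hwF : Summable fun y => w y * F y :=
    (hw.mul_right C).of_nonneg_of_le (fun y => mul_nonneg (hw0 y) (hF0 y))
      fun y => mul_le_mul_of_nonneg_left (hFC y) (hw0 y)
  rw [markovExp, ENNReal.ofReal_tsum_of_nonneg (fun y => mul_nonneg (hw0 y) (hF0 y)) hwF]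
  exact tsum_congr fun y => by rw [ENNReal.ofReal_mul (hw0 y), hwP]

lemma markovLExp_sum_ofReal_mul (hK0 : ∀ x y, 0 ≤ K x y) (hK1 : ∀ x, ∑' y, K x y = 1)
    {k : ℕ} (x : E) {c : ℝ} (hc : 0 ≤ c) {f : E → ℝ} (hf0 : ∀ z, 0 ≤ f z) {C : ℝ}
    (hfC : ∀ z, f z ≤ C) :
    markovLExp (fun x y => ENNReal.ofReal (K x y)) k x (fun y => ∑ n, ENNReal.ofReal (c * f (y n)))
      = ENNReal.ofReal (c * markovExp K k x fun y => ∑ n, f (y n)) := by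
  have hsum_le (y : Fin k → E) : ∑ n, f (y n) ≤ k * C := by
    simpa using sum_le_sum fun n (_ : n ∈ univ) => hfC (y n)
  simp only [ENNReal.ofReal_mul hc, ← mul_sum, markovLExp_const_mul,
    ← ENNReal.ofReal_sum_of_nonneg fun n _ => hf0 _,
    ofReal_markovExp hK0 hK1 x (fun y => sum_nonneg fun n _ => hf0 _) hsum_le]

end MarkovExp

theorem discrete_khasminskii_cor_general {E : Type*} (K : E → E → ℝ)
    (hK0 : ∀ x y, 0 ≤ K x y) (hK1 : ∀ x, ∑' y, K x y = 1)
    (f : E → ℝ) (hf : ∀ x, f x ∈ Set.Icc (0 : ℝ) 1) (k : ℕ) (η₁ : ℝ)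
    (hbound : ∀ x : E, markovExp K k x (fun y => ∑ n : Fin k, f (y n)) ≤ η₁)
    (he : Real.exp 1 * η₁ < 1) :
    ∀ x : E,
      markovExp K k x (fun y => Real.exp (∑ n : Fin k, f (y n))) ≤
        1 / (1 - Real.exp 1 * η₁) := by
  intro x
  set P : E → E → ℝ≥0∞ := fun x y => ENNReal.ofReal (K x y)
  have hP x : ∑' y, P x y = 1 := ENNReal.tsum_ofReal_eq_one (hK0 x) (hK1 x)
  have hsum_le (y : Fin k → E) : ∑ n, f (y n) ≤ k := by
    simpa using sum_le_sum fun n (_ : n ∈ univ) => (hf (y n)).2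
  have hη₁ : 0 ≤ η₁ :=
    (markovExp_nonneg hK0 x fun y => sum_nonneg fun n _ => (hf _).1).trans (hbound x)
  set h : E → ℝ≥0∞ := fun z => ENNReal.ofReal (Real.exp 1 * f z)
  have hh z : markovLExp P k z (fun y => ∑ n, h (y n)) ≤ ENNReal.ofReal (Real.exp 1 * η₁) := by
    rw [markovLExp_sum_ofReal_mul hK0 hK1 z (Real.exp_pos 1).le (fun z => (hf z).1)
      (fun z => (hf z).2)]
    gcongr
    exact hbound z
  have key := (markovLExp_mono P k x fun y =>
    ENNReal.ofReal_exp_sum_le_prod_one_add _ fun n => hf _).trans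
      (markovLExp_prod_one_add_le hP h hh x)
  rw [← ofReal_markovExp hK0 hK1 x (fun y => (Real.exp_pos _).le)
      (fun y => Real.exp_le_exp.2 (hsum_le y)),
    ENNReal.inv_one_sub_ofReal (by positivity) he] at key
  exact (ENNReal.ofReal_le_ofReal_iff (one_div_pos.2 (sub_pos.2 he)).le).1 key

/-- Corollary of the discrete Khas'minskii lemma for `f : E → [0,1]`: if
`η₁ = sup_x E_x[Σ_{n=1}^k f(Y_n)] < 1` and `e·η₁ < 1`, then
`sup_x E_x[exp(Σ_{n=1}^k f(Y_n))] ≤ 1/(1 − e·η₁)`. -/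
theorem discrete_khasminskii_cor {E : Type*} [Countable E] (K : E → E → ℝ)
    (hK0 : ∀ x y, 0 ≤ K x y) (hK1 : ∀ x, ∑' y, K x y = 1)
    (f : E → ℝ) (hf : ∀ x, f x ∈ Set.Icc (0 : ℝ) 1) (k : ℕ) (η₁ : ℝ) (hη : η₁ < 1)
    (hbound : ∀ x : E, markovExp K k x (fun y => ∑ n : Fin k, f (y n)) ≤ η₁)
    (he : Real.exp 1 * η₁ < 1) :
    ∀ x : E,
      markovExp K k x (fun y => Real.exp (∑ n : Fin k, f (y n))) ≤
        1 / (1 - Real.exp 1 * η₁) :=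
  discrete_khasminskii_cor_general K hK0 hK1 f hf k η₁ hbound he
end

section
/- For two independent simple random walks on Z^2 started at 0, and any n ≥ 1 and β > 0 with σ² = e^{β²} − 1, E^{⊗2}[exp(β² Σ_{k=1}^n 1{S_k^1 = S_k^2})] ≤ 1/(1 − σ² R_n), provided σ² R_n < 1, where R_n = Σ_{s=1}^n p_{2s}(0). -/
open Finset

/-- Position at time `k` of the simple random walk started at `0` with moves `m`. -/
def pos0 (n : ℕ) (m : Fin n → Fin 4) (k : ℕ) : ℤ × ℤ :=
  ∑ i ∈ Finset.univ.filter (fun i : Fin n => (i : ℕ) < k), dir (m i)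

/-- Expectation over two independent `n`-step simple random walks started at `0`. -/
noncomputable def E2 (n : ℕ) (F : (Fin n → Fin 4) → (Fin n → Fin 4) → ℝ) : ℝ :=
  (∑ m₁ : Fin n → Fin 4, ∑ m₂ : Fin n → Fin 4, F m₁ m₂) / (4 ^ n * 4 ^ n)

/-- Expected intersection local time `R_n = Σ_{s=1}^n p_{2s}(0)`. -/
noncomputable def R (n : ℕ) : ℝ := ∑ s ∈ Finset.Icc 1 n, p (2 * s) 0

/-!
Put `σ² = e^{β²} - 1` and let `D = S¹ - S²` be the difference walk, so that
`exp (β² ∑ₖ 1{S¹ₖ = S²ₖ}) = ∏ₖ (1 + σ² 1{Dₖ = 0})`. Expanding the product as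
`∏_{k ≤ n} (1 + xₖ) = 1 + ∑ₜ xₜ ∏_{t < k ≤ n} (1 + xₖ)` and restarting `D` at a return time `t`
(Markov property) gives the renewal equation `Zₙ = 1 + σ² ∑_{t=1}^n P(D_t = 0) Z_{n-t}` for
`Zₙ = E[∏_{k ≤ n} (1 + σ² 1{Dₖ = 0})]`. Since the step law is symmetric, `D_t` has the law of a
`2t`-step walk, so `P(D_t = 0) = p_{2t}(0)`. Finally `B = 1 / (1 - σ² Rₙ)` solves
`B = 1 + σ² Rₙ B`, and strong induction on the renewal equation gives `Z_m ≤ B` for `m ≤ n`.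
-/

theorem Finset.prod_one_add_ordered_gt {ι R : Type*} [CommRing R] [LinearOrder ι]
    (s : Finset ι) (x : ι → R) :
    ∏ i ∈ s, (1 + x i) = 1 + ∑ i ∈ s, x i * ∏ j ∈ s with i < j, (1 + x j) := by
  have h := prod_add_ordered s (fun i => 1 + x i) (fun i => -x i)
  simp only [add_neg_cancel_right, prod_const_one, neg_mul, sum_neg_distrib, mul_one] at h
  linear_combination -h

theorem Real.exp_mul_sum_ite {ι : Type*} (s : Finset ι) (P : ι → Prop) [DecidablePred P]
    (a : ℝ) :
    Real.exp (a * ∑ k ∈ s, if P k then 1 else 0) =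
      ∏ k ∈ s, (1 + (Real.exp a - 1) * if P k then 1 else 0) := by
  rw [mul_sum, Real.exp_sum]
  refine prod_congr rfl fun k _ => ?_
  split_ifs <;> simp

theorem le_one_div_of_renewal {q ρ : ℕ → ℝ} {c : ℝ} {N : ℕ} (hc : 0 ≤ c) (hρ : ∀ t, 0 ≤ ρ t)
    (hN : c * ∑ t ∈ Icc 1 N, ρ t < 1)
    (hq : ∀ n, q n = 1 + c * ∑ t ∈ Icc 1 n, ρ t * q (n - t)) {n : ℕ} (hn : n ≤ N) :
    q n ≤ 1 / (1 - c * ∑ t ∈ Icc 1 N, ρ t) := by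
  set B := 1 / (1 - c * ∑ t ∈ Icc 1 N, ρ t)
  have hB : 1 + c * ((∑ t ∈ Icc 1 N, ρ t) * B) = B := by
    simp only [B]
    field_simp [(sub_pos.mpr hN).ne']
    ring
  induction n using Nat.strong_induction_on with
  | _ n ih =>
    calc q n = 1 + c * ∑ t ∈ Icc 1 n, ρ t * q (n - t) := hq n
      _ ≤ 1 + c * ∑ t ∈ Icc 1 n, ρ t * B := by
        gcongr with t ht
        · exact hρ t
        · exact ih (n - t) (by rw [mem_Icc] at ht; omega) (by omega)
      _ ≤ 1 + c * ((∑ t ∈ Icc 1 N, ρ t) * B) := by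
        rw [← sum_mul]
        gcongr
        exact fun t _ _ => hρ t
      _ = B := hB

section Walk

variable {α G : Type*} [AddCommGroup G] (f : α → G)

def walkPos {n : ℕ} (m : Fin n → α) (k : ℕ) : G :=
  ∑ i ∈ univ.filter (fun i : Fin n => (i : ℕ) < k), f (m i)

variable {f}

theorem walkPos_eq_sum {n : ℕ} (m : Fin n → α) : walkPos f m n = ∑ i, f (m i) := by
  rw [walkPos, filter_true_of_mem fun i _ => i.isLt]

theorem walkPos_append_of_le {t r k : ℕ} (u : Fin t → α) (v : Fin r → α) (hk : k ≤ t) :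
    walkPos f (Fin.append u v) k = walkPos f u k := by
  simp only [walkPos, sum_filter, Fin.sum_univ_add, Fin.append_left, Fin.append_right,
    Fin.val_castAdd, Fin.val_natAdd, add_eq_left]
  exact sum_eq_zero fun i _ => if_neg (by omega)

theorem walkPos_append_add {t r : ℕ} (u : Fin t → α) (v : Fin r → α) (j : ℕ) :
    walkPos f (Fin.append u v) (t + j) = walkPos f u t + walkPos f v j := by
  simp only [walkPos, sum_filter, Fin.sum_univ_add, Fin.append_left, Fin.append_right,
    Fin.val_castAdd, Fin.val_natAdd, add_lt_add_iff_left, Fin.is_lt, if_true]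
  congr 1
  exact sum_congr rfl fun i _ => if_pos (by omega)

end Walk

section Pinning

variable {α G : Type*} [Fintype α] [AddCommGroup G] [DecidableEq G] (f : α → G)

def returnCount (t : ℕ) : ℕ := #{m : Fin t → α | walkPos f m t = 0}

noncomputable def returnProb (t : ℕ) : ℝ := returnCount f t / Fintype.card α ^ t

noncomputable def pinningSum (c : ℝ) (n : ℕ) : ℝ :=
  ∑ m : Fin n → α, ∏ k ∈ Icc 1 n, (1 + c * if walkPos f m k = 0 then 1 else 0)

noncomputable def pinningMean (c : ℝ) (n : ℕ) : ℝ := pinningSum f c n / Fintype.card α ^ n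

theorem returnProb_nonneg (t : ℕ) : 0 ≤ returnProb f t := by
  unfold returnProb; positivity

variable {f}

/-- Markov property at a return time `t`: the walk restarts from `0`. -/
theorem sum_ite_mul_prod_restart (c : ℝ) (t r : ℕ) :
    ∑ m : Fin (t + r) → α, (if walkPos f m t = 0 then 1 else 0) *
        ∏ k ∈ Icc (t + 1) (t + r), (1 + c * if walkPos f m k = 0 then 1 else 0)
      = returnCount f t * pinningSum f c r := by
  rw [← (Fin.appendEquiv t r).sum_comp, Fintype.sum_prod_type, returnCount, pinningSum,
    natCast_card_filter, Fintype.sum_mul_sum]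
  refine sum_congr rfl fun u _ => sum_congr rfl fun v _ => ?_
  rw [show Fin.appendEquiv t r (u, v) = Fin.append u v from rfl, walkPos_append_of_le u v le_rfl]
  split_ifs with hu
  · rw [← map_add_left_Icc, prod_map]
    simp [walkPos_append_add, hu]
  · simp

theorem pinningSum_eq (c : ℝ) (n : ℕ) :
    pinningSum f c n = Fintype.card α ^ n +
      c * ∑ t ∈ Icc 1 n, returnCount f t * pinningSum f c (n - t) := by
  have hexpand : ∀ m : Fin n → α,
      ∏ k ∈ Icc 1 n, (1 + c * if walkPos f m k = 0 then 1 else 0) =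
        1 + ∑ t ∈ Icc 1 n, c * (if walkPos f m t = 0 then 1 else 0) *
          ∏ k ∈ Icc (t + 1) n, (1 + c * if walkPos f m k = 0 then 1 else 0) := by
    intro m
    rw [prod_one_add_ordered_gt]
    refine congrArg _ (sum_congr rfl fun t _ => congrArg _ (prod_congr ?_ fun _ _ => rfl))
    ext k
    simp only [mem_filter, mem_Icc]
    omega
  have hrestart : ∀ t ∈ Icc 1 n,
      ∑ m : Fin n → α, (if walkPos f m t = 0 then 1 else 0) *
        ∏ k ∈ Icc (t + 1) n, (1 + c * if walkPos f m k = 0 then 1 else 0)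
        = returnCount f t * pinningSum f c (n - t) := by
    intro t ht
    obtain ⟨r, rfl⟩ := Nat.exists_eq_add_of_le (mem_Icc.mp ht).2
    rw [Nat.add_sub_cancel_left, sum_ite_mul_prod_restart]
  rw [pinningSum, sum_congr rfl fun m _ => hexpand m, sum_add_distrib, sum_comm, mul_sum]
  simp only [sum_const, card_univ, Fintype.card_fun, Fintype.card_fin, nsmul_eq_mul, mul_one,
    Nat.cast_pow, mul_assoc, ← mul_sum]
  rw [sum_congr rfl hrestart]

theorem pinningMean_eq [Nonempty α] (c : ℝ) (n : ℕ) :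
    pinningMean f c n = 1 + c * ∑ t ∈ Icc 1 n, returnProb f t * pinningMean f c (n - t) := by
  have hcard : (0 : ℝ) < Fintype.card α := by exact_mod_cast Fintype.card_pos
  rw [pinningMean, pinningSum_eq, add_div, div_self (by positivity), mul_div_assoc, sum_div]
  congr 2
  refine sum_congr rfl fun t ht => ?_
  obtain ⟨r, rfl⟩ := Nat.exists_eq_add_of_le (mem_Icc.mp ht).2
  rw [returnProb, pinningMean, Nat.add_sub_cancel_left, pow_add]
  field_simp

end Pinning

section DifferenceWalk

variable {α G : Type*} [AddCommGroup G] {f : α → G}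

def diffStep (f : α → G) (a : α × α) : G := f a.1 - f a.2

theorem walkPos_diffStep {n : ℕ} (u v : Fin n → α) (k : ℕ) :
    walkPos (diffStep f) (fun i => (u i, v i)) k = walkPos f u k - walkPos f v k := by
  simp only [walkPos, diffStep, sum_sub_distrib]

theorem walkPos_comp_of_map_neg {ν : α → α} (hf : ∀ a, f (ν a) = -f a) {n : ℕ}
    (v : Fin n → α) (k : ℕ) : walkPos f (ν ∘ v) k = -walkPos f v k := by
  simp only [walkPos, Function.comp_apply, hf, sum_neg_distrib]

variable [Fintype α] [DecidableEq G]

/-- Negating the steps of the second walk and appending them to the first turns `S¹_t = S²_t`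
into a return to `0` of a `2t`-step walk. -/
theorem returnCount_diffStep {ν : α → α} (hν : Function.Involutive ν)
    (hf : ∀ a, f (ν a) = -f a) (t : ℕ) :
    returnCount (diffStep f) t = returnCount f (t + t) := by
  let e : (Fin t → α × α) ≃ (Fin (t + t) → α) :=
    (Equiv.arrowProdEquivProdArrow _ _ _).trans
      ((Equiv.prodCongr (Equiv.refl _) (Equiv.piCongrRight fun _ => hν.toPerm ν)).trans
        (Fin.appendEquiv t t))
  refine card_equiv e fun m => ?_
  have hm : walkPos f (e m) (t + t) = walkPos (diffStep f) m t := by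
    rw [show e m = Fin.append (fun i => (m i).1) (ν ∘ fun i => (m i).2) from rfl,
      walkPos_append_add, walkPos_comp_of_map_neg hf, ← sub_eq_add_neg, walkPos_diffStep]
  simp only [mem_filter, mem_univ, true_and, hm]

theorem returnProb_diffStep {ν : α → α} (hν : Function.Involutive ν)
    (hf : ∀ a, f (ν a) = -f a) (t : ℕ) :
    returnProb (diffStep f) t = returnProb f (t + t) := by
  rw [returnProb, returnProb, returnCount_diffStep hν hf, Fintype.card_prod, Nat.cast_mul,
    mul_pow, pow_add]

end DifferenceWalk

theorem dir_neg (a : Fin 4) : dir (![1, 0, 3, 2] a) = -dir a := by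
  fin_cases a <;> simp [dir]

theorem p_zero_eq_returnProb (n : ℕ) : p n 0 = returnProb dir n := by
  simp [p, returnProb, returnCount, walkPos_eq_sum]

theorem R_eq_sum_returnProb_diffStep (n : ℕ) :
    R n = ∑ t ∈ Icc 1 n, returnProb (diffStep dir) t := by
  refine sum_congr rfl fun t _ => ?_
  rw [returnProb_diffStep (ν := ![1, 0, 3, 2]) (fun a => by fin_cases a <;> rfl) dir_neg,
    two_mul, p_zero_eq_returnProb]

theorem E2_exp_eq_pinningMean (n : ℕ) (β : ℝ) :
    E2 n (fun m₁ m₂ => Real.exp (β ^ 2 * ∑ k ∈ Finset.Icc 1 n,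
        if pos0 n m₁ k = pos0 n m₂ k then (1 : ℝ) else 0)) =
      pinningMean (diffStep dir) (Real.exp (β ^ 2) - 1) n := by
  have hpos : ∀ (m₁ m₂ : Fin n → Fin 4) (k : ℕ),
      pos0 n m₁ k = pos0 n m₂ k ↔ walkPos (diffStep dir) (fun i => (m₁ i, m₂ i)) k = 0 := by
    intro m₁ m₂ k
    rw [walkPos_diffStep, sub_eq_zero]
    rfl
  simp only [E2, pinningMean, pinningSum, Real.exp_mul_sum_ite, hpos]
  rw [← (Equiv.arrowProdEquivProdArrow _ _ _).symm.sum_comp, Fintype.sum_prod_type]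
  simp only [Fintype.card_prod, Fintype.card_fin, Nat.cast_mul, Nat.cast_ofNat, mul_pow]
  rfl

theorem second_moment_upper_general (n : ℕ) (β : ℝ)
    (hσ : (Real.exp (β ^ 2) - 1) * R n < 1) :
    E2 n (fun m₁ m₂ => Real.exp (β ^ 2 * ∑ k ∈ Finset.Icc 1 n,
        if pos0 n m₁ k = pos0 n m₂ k then (1 : ℝ) else 0)) ≤
      1 / (1 - (Real.exp (β ^ 2) - 1) * R n) := by
  have hc : 0 ≤ Real.exp (β ^ 2) - 1 := sub_nonneg.mpr (Real.one_le_exp (sq_nonneg β))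
  rw [R_eq_sum_returnProb_diffStep] at hσ ⊢
  rw [E2_exp_eq_pinningMean]
  exact le_one_div_of_renewal hc (returnProb_nonneg _) hσ (pinningMean_eq _) le_rfl

/-- Second-moment upper bound: with `σ² = e^{β²} − 1`, if `σ² R_n < 1`, then
`E^{⊗2}[exp(β² Σ_{k=1}^n 1{S_k^1 = S_k^2})] ≤ 1/(1 − σ² R_n)`. -/
theorem second_moment_upper (n : ℕ) (hn : 1 ≤ n) (β : ℝ) (hβ : 0 < β)
    (hσ : (Real.exp (β ^ 2) - 1) * R n < 1) :
    E2 n (fun m₁ m₂ => Real.exp (β ^ 2 * ∑ k ∈ Finset.Icc 1 n,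
        if pos0 n m₁ k = pos0 n m₂ k then (1 : ℝ) else 0)) ≤
      1 / (1 - (Real.exp (β ^ 2) - 1) * R n) :=
  second_moment_upper_general n β hσ
end

section
/- For two independent planar simple random walks started at 0 with σ² = e^{β²} − 1, one has for all n ≥ 1: E^{⊗2}[exp(β² Σ_{k=1}^n 1{S_k^1=S_k^2})] ≥ (1 − (σ² R_{⌊n/log n⌋})^{⌊log n⌋+1})/(1 − σ² R_{⌊n/log n⌋}), provided σ² R_{⌊n/log n⌋} < 1. -/
open Finset

/-!
Since `exp (β² 1{S¹_k = S²_k}) = 1 + σ² 1{S¹_k = S²_k}`, multiplying out turns the exponential into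
`∑_{A ⊆ ⟦1, n⟧} σ^{2|A|} ∏_{k ∈ A} 1{S¹_k = S²_k}`, a sum of nonnegative terms. Keep only the sets
`A = {t_1 < ⋯ < t_j}` with `j ≤ ⌊log n⌋` and all gaps `t_i - t_{i-1}` in `⟦1, ℓ⟧`,
`ℓ = ⌊n / log n⌋`; since `j ℓ ≤ n` they all lie in `⟦1, n⟧`. By independence of the increments the
two walks meet at every time of such an `A` with probability `∏ p_{2(t_i - t_{i-1})}(0)`, so summing
over the gaps gives the geometric sum `∑_{j ≤ ⌊log n⌋} (σ² R_ℓ)^j`.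
-/

section E2

variable {n : ℕ}

lemma E2_mono {F G : (Fin n → Fin 4) → (Fin n → Fin 4) → ℝ}
    (h : ∀ m₁ m₂, F m₁ m₂ ≤ G m₁ m₂) : E2 n F ≤ E2 n G := by
  unfold E2
  gcongr with m₁ _ m₂
  exact h m₁ m₂

lemma E2_const (c : ℝ) : E2 n (fun _ _ => c) = c := by
  simp only [E2, sum_const, card_univ, Fintype.card_pi, Fintype.card_fin, prod_const,
    nsmul_eq_mul, Nat.cast_pow, Nat.cast_ofNat]
  field_simp

lemma E2_const_mul (c : ℝ) (F : (Fin n → Fin 4) → (Fin n → Fin 4) → ℝ) :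
    E2 n (fun m₁ m₂ => c * F m₁ m₂) = c * E2 n F := by
  simp only [E2, ← mul_sum, mul_div_assoc]

lemma E2_mul_const (c : ℝ) (F : (Fin n → Fin 4) → (Fin n → Fin 4) → ℝ) :
    E2 n (fun m₁ m₂ => F m₁ m₂ * c) = E2 n F * c := by
  simp only [mul_comm _ c, E2_const_mul]

lemma E2_sum {ι : Type*} (S : Finset ι) (F : ι → (Fin n → Fin 4) → (Fin n → Fin 4) → ℝ) :
    E2 n (fun m₁ m₂ => ∑ x ∈ S, F x m₁ m₂) = ∑ x ∈ S, E2 n (F x) := by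
  simp only [E2, ← sum_div]
  congr 1
  exact (sum_comm.trans (sum_congr rfl fun _ _ => sum_comm)).symm

lemma E2_add (t u : ℕ) (F : (Fin (t + u) → Fin 4) → (Fin (t + u) → Fin 4) → ℝ) :
    E2 (t + u) F = E2 t fun a₁ a₂ =>
      E2 u fun b₁ b₂ => F (Fin.append a₁ b₁) (Fin.append a₂ b₂) := by
  have split : ∀ f : (Fin (t + u) → Fin 4) → ℝ,
      ∑ m, f m = ∑ a : Fin t → Fin 4, ∑ b : Fin u → Fin 4, f (Fin.append a b) := fun f => by
    rw [← (Fin.appendEquiv t u).sum_comp, Fintype.sum_prod_type]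
    rfl
  simp only [E2, split, ← sum_div]
  rw [sum_congr rfl fun a₁ _ => sum_comm, div_div, pow_add]
  ring_nf

end E2

section Walk

lemma pos0_eq_sum_ite (n : ℕ) (m : Fin n → Fin 4) (k : ℕ) :
    pos0 n m k = ∑ i : Fin n, if (i : ℕ) < k then dir (m i) else 0 :=
  sum_filter _ _

lemma pos0_of_le {n k : ℕ} (m : Fin n → Fin 4) (hk : n ≤ k) : pos0 n m k = ∑ i, dir (m i) := by
  rw [pos0_eq_sum_ite]
  exact sum_congr rfl fun i _ => if_pos (by omega)

lemma pos0_append {t u : ℕ} (a : Fin t → Fin 4) (b : Fin u → Fin 4) (k : ℕ) :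
    pos0 (t + u) (Fin.append a b) k = pos0 t a k + pos0 u b (k - t) := by
  simp only [pos0_eq_sum_ite, Fin.sum_univ_add, Fin.append_left, Fin.append_right,
    Fin.val_castAdd, Fin.val_natAdd]
  congr 1
  exact sum_congr rfl fun i _ => if_congr (by omega) rfl rfl

@[simp]
lemma pos0_zero (n : ℕ) (m : Fin n → Fin 4) : pos0 n m 0 = 0 := by
  simp [pos0]

lemma pos0_append_add {t u : ℕ} (a : Fin t → Fin 4) (b : Fin u → Fin 4) (k : ℕ) :
    pos0 (t + u) (Fin.append a b) (t + k) = ∑ i, dir (a i) + pos0 u b k := by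
  rw [pos0_append, pos0_of_le a (by omega), Nat.add_sub_cancel_left]

def dirNeg : Equiv.Perm (Fin 4) := Equiv.swap 0 1 * Equiv.swap 2 3

lemma dir_dirNeg (i : Fin 4) : dir (dirNeg i) = -dir i := by
  fin_cases i <;> decide

/-- Two independent `t`-step walks end at the same point exactly as often as a `2t`-step walk
(the first followed by the reversal of the second) returns to the origin. -/
lemma E2_endpoint_eq (t : ℕ) :
    E2 t (fun a₁ a₂ => if ∑ i, dir (a₁ i) = ∑ i, dir (a₂ i) then (1 : ℝ) else 0) =
      p (2 * t) 0 := by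
  have reverse : ∀ a₁ : Fin t → Fin 4,
      ∑ a₂ : Fin t → Fin 4, (if ∑ i, dir (a₁ i) = ∑ i, dir (a₂ i) then (1 : ℝ) else 0) =
        ∑ a₂ : Fin t → Fin 4, if ∑ i, dir (a₁ i) + ∑ i, dir (a₂ i) = 0 then 1 else 0 := by
    intro a₁
    rw [← (Equiv.piCongrRight fun _ => dirNeg).sum_comp]
    refine sum_congr rfl fun a₂ _ => if_congr ?_ rfl rfl
    simp [dir_dirNeg, sum_neg_distrib, eq_neg_iff_add_eq_zero]
  rw [p, two_mul, card_filter, ← (Fin.appendEquiv t t).sum_comp, Fintype.sum_prod_type, E2,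
    pow_add]
  simp only [reverse, Fin.appendEquiv_apply, Fin.sum_univ_add, Fin.append_left, Fin.append_right,
    Nat.cast_sum, Nat.cast_ite, Nat.cast_one, Nat.cast_zero]

end Walk

lemma E2_prod_meet_eq_prod_p : ∀ {j n : ℕ} (v : Fin j → ℕ), ∑ i, v i ≤ n →
    E2 n (fun m₁ m₂ => ∏ i : Fin j,
      if pos0 n m₁ (Fin.partialSum v i.succ) = pos0 n m₂ (Fin.partialSum v i.succ)
      then (1 : ℝ) else 0) = ∏ i, p (2 * v i) 0
  | 0, n, v, _ => by simp [E2_const]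
  | j + 1, n, v, hv => by
    rw [Fin.sum_univ_succ] at hv
    obtain ⟨u, rfl⟩ : ∃ u, n = v 0 + u := ⟨n - v 0, by omega⟩
    have factor : ∀ (a₁ a₂ : Fin (v 0) → Fin 4) (b₁ b₂ : Fin u → Fin 4),
        (∏ i : Fin (j + 1), if pos0 _ (Fin.append a₁ b₁) (Fin.partialSum v i.succ) =
          pos0 _ (Fin.append a₂ b₂) (Fin.partialSum v i.succ) then (1 : ℝ) else 0) =
        (if ∑ i, dir (a₁ i) = ∑ i, dir (a₂ i) then 1 else 0) *
          ∏ i : Fin j, if pos0 u b₁ (Fin.partialSum (Fin.tail v) i.succ) =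
            pos0 u b₂ (Fin.partialSum (Fin.tail v) i.succ) then 1 else 0 := by
      intro a₁ a₂ b₁ b₂
      -- after the first meeting at time `v 0`, the common offset `∑ dir a` cancels
      simp only [Fin.prod_univ_succ, Fin.partialSum_succ', pos0_append_add, Fin.partialSum_zero,
        pos0_zero, add_zero]
      split_ifs with h <;> simp [h]
    have tail_meet :=
      E2_prod_meet_eq_prod_p (n := u) (Fin.tail v) (by simp only [Fin.tail]; omega)
    rw [E2_add]
    simp only [factor, E2_const_mul, tail_meet, E2_mul_const, E2_endpoint_eq, Fin.prod_univ_succ]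
    rfl

lemma sum_prod_le_prod_one_add {ι α R : Type*} [DecidableEq α] [CommSemiring R] [PartialOrder R]
    [IsOrderedRing R] {S : Finset ι} {A : ι → Finset α} {T : Finset α} {f : α → R}
    (hf : ∀ k ∈ T, 0 ≤ f k) (hA : Set.InjOn A S) (hAT : ∀ x ∈ S, A x ⊆ T) :
    ∑ x ∈ S, ∏ k ∈ A x, f k ≤ ∏ k ∈ T, (1 + f k) := by
  rw [prod_one_add, ← sum_image (f := fun B => ∏ k ∈ B, f k) hA]
  refine sum_le_sum_of_subset_of_nonneg ?_ fun B hB _ => ?_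
  · simpa [subset_iff] using hAT
  · exact prod_nonneg fun k hk => hf k (mem_powerset.mp hB hk)

namespace Fin

lemma partialSum_le_sum {j : ℕ} (v : Fin j → ℕ) (i : Fin (j + 1)) :
    partialSum v i ≤ ∑ k, v k := by
  rw [partialSum, ← List.sum_ofFn]
  exact (List.take_sublist _ _).sum_le_sum fun _ _ => Nat.zero_le _

lemma strictMono_partialSum_succ {j : ℕ} {v : Fin j → ℕ} (hv : ∀ i, 0 < v i) :
    StrictMono fun i : Fin j => partialSum v i.succ := by
  have : StrictMono (partialSum v) := strictMono_iff_lt_succ.mpr fun i => by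
    rw [partialSum_succ]
    exact Nat.lt_add_of_pos_right (hv i)
  exact this.comp strictMono_succ

lemma partialSum_succ_injective {j : ℕ} :
    Function.Injective fun (v : Fin j → ℕ) (i : Fin j) => partialSum v i.succ := by
  intro v w h
  have hvw : partialSum v = partialSum w := funext fun k =>
    k.cases (by simp only [partialSum_zero]) fun i => congrFun h i
  funext i
  have hv := partialSum_succ v i
  have hw := partialSum_succ w i
  rw [hvw] at hv
  omega

end Fin

def meetTimes {j : ℕ} (v : Fin j → ℕ) : Finset ℕ :=
  univ.image fun i : Fin j => Fin.partialSum v i.succ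

def gapVectors (L l : ℕ) : Finset ((j : ℕ) × (Fin j → ℕ)) :=
  (range (L + 1)).sigma fun _ => Fintype.piFinset fun _ => Icc 1 l

section gapVectors

variable {L l : ℕ} {x : (j : ℕ) × (Fin j → ℕ)}

lemma mem_gapVectors : x ∈ gapVectors L l ↔ x.1 ≤ L ∧ ∀ i, 1 ≤ x.2 i ∧ x.2 i ≤ l := by
  simp [gapVectors]

lemma sum_le_of_mem_gapVectors {n : ℕ} (hLl : L * l ≤ n) (hx : x ∈ gapVectors L l) :
    ∑ i, x.2 i ≤ n := by
  obtain ⟨hj, hv⟩ := mem_gapVectors.mp hx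
  calc ∑ i, x.2 i ≤ ∑ _i : Fin x.1, l := sum_le_sum fun i _ => (hv i).2
    _ = x.1 * l := by simp
    _ ≤ n := (Nat.mul_le_mul_right l hj).trans hLl

lemma card_meetTimes {j : ℕ} {v : Fin j → ℕ} (hv : ∀ i, 0 < v i) : #(meetTimes v) = j := by
  rw [meetTimes, card_image_of_injective _ (Fin.strictMono_partialSum_succ hv).injective,
    card_univ, Fintype.card_fin]

lemma meetTimes_injOn_gapVectors (L l : ℕ) :
    Set.InjOn (fun x : (j : ℕ) × (Fin j → ℕ) => meetTimes x.2) (gapVectors L l) := by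
  rintro ⟨j, v⟩ hv ⟨j', w⟩ hw (h : meetTimes v = meetTimes w)
  have hv0 : ∀ i, 0 < v i := fun i => ((mem_gapVectors.mp hv).2 i).1
  have hw0 : ∀ i, 0 < w i := fun i => ((mem_gapVectors.mp hw).2 i).1
  obtain rfl : j = j' := by rw [← card_meetTimes hv0, h, card_meetTimes hw0]
  have hrange := congrArg ((↑) : Finset ℕ → Set ℕ) h
  simp only [meetTimes, coe_image, coe_univ, Set.image_univ] at hrange
  rw [(Fin.strictMono_partialSum_succ hv0).range_inj (Fin.strictMono_partialSum_succ hw0)]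
    at hrange
  rw [Fin.partialSum_succ_injective hrange]

lemma meetTimes_subset_Icc {n : ℕ} (hLl : L * l ≤ n) (hx : x ∈ gapVectors L l) :
    meetTimes x.2 ⊆ Icc 1 n := by
  simp only [meetTimes, subset_iff, mem_image, mem_univ, true_and, mem_Icc, forall_exists_index,
    forall_apply_eq_imp_iff]
  intro i
  refine ⟨((mem_gapVectors.mp hx).2 i).1.trans ?_, ?_⟩
  · rw [Fin.partialSum_succ]
    exact Nat.le_add_left _ _
  · exact (Fin.partialSum_le_sum _ _).trans (sum_le_of_mem_gapVectors hLl hx)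

lemma sum_gapVectors_le_prod_one_add {n : ℕ} (hLl : L * l ≤ n) {s : ℝ} (hs : 0 ≤ s)
    {δ : ℕ → ℝ} (hδ : ∀ k, 0 ≤ δ k) :
    ∑ x ∈ gapVectors L l, s ^ x.1 * ∏ i : Fin x.1, δ (Fin.partialSum x.2 i.succ) ≤
      ∏ k ∈ Icc 1 n, (1 + s * δ k) := by
  calc ∑ x ∈ gapVectors L l, s ^ x.1 * ∏ i : Fin x.1, δ (Fin.partialSum x.2 i.succ)
      = ∑ x ∈ gapVectors L l, ∏ k ∈ meetTimes x.2, s * δ k := by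
        refine sum_congr rfl fun x hx => ?_
        have hv0 : ∀ i, 0 < x.2 i := fun i => ((mem_gapVectors.mp hx).2 i).1
        rw [meetTimes, prod_image (Fin.strictMono_partialSum_succ hv0).injective.injOn,
          prod_mul_distrib, prod_const, card_univ, Fintype.card_fin]
    _ ≤ ∏ k ∈ Icc 1 n, (1 + s * δ k) :=
        sum_prod_le_prod_one_add (fun k _ => mul_nonneg hs (hδ k))
          (meetTimes_injOn_gapVectors L l) fun _ hx => meetTimes_subset_Icc hLl hx

lemma sum_gapVectors_eq_geom_sum (L l : ℕ) (s : ℝ) (f : ℕ → ℝ) :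
    ∑ x ∈ gapVectors L l, s ^ x.1 * ∏ i, f (x.2 i) =
      ∑ j ∈ range (L + 1), (s * ∑ g ∈ Icc 1 l, f g) ^ j := by
  rw [gapVectors, sum_sigma]
  refine sum_congr rfl fun j _ => ?_
  dsimp only
  rw [mul_pow, ← Fin.prod_const j (∑ g ∈ Icc 1 l, f g), prod_univ_sum, mul_sum]

end gapVectors

lemma Nat.floor_mul_floor_div_le (a : ℝ) (n : ℕ) : ⌊a⌋₊ * ⌊n / a⌋₊ ≤ n := by
  rcases le_or_gt a 0 with ha | ha
  · simp [Nat.floor_eq_zero.mpr (ha.trans_lt one_pos)]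
  · have : (⌊a⌋₊ * ⌊n / a⌋₊ : ℝ) ≤ a * (n / a) :=
      mul_le_mul (Nat.floor_le ha.le) (Nat.floor_le (by positivity)) (by positivity) ha.le
    rw [mul_div_cancel₀ _ ha.ne'] at this
    exact_mod_cast this

lemma Real.exp_mul_ite_one_zero (b : ℝ) (P : Prop) [Decidable P] :
    Real.exp (b * if P then 1 else 0) = 1 + (Real.exp b - 1) * if P then 1 else 0 := by
  split_ifs <;> simp

theorem second_moment_lower_general (n : ℕ) (β : ℝ)
    (hσ : (Real.exp (β ^ 2) - 1) * R (Nat.floor ((n : ℝ) / Real.log n)) < 1) :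
    (1 - ((Real.exp (β ^ 2) - 1) * R (Nat.floor ((n : ℝ) / Real.log n)))
          ^ (Nat.floor (Real.log n) + 1)) /
        (1 - (Real.exp (β ^ 2) - 1) * R (Nat.floor ((n : ℝ) / Real.log n))) ≤
      E2 n (fun m₁ m₂ => Real.exp (β ^ 2 * ∑ k ∈ Finset.Icc 1 n,
        if pos0 n m₁ k = pos0 n m₂ k then (1 : ℝ) else 0)) := by
  set L := ⌊Real.log n⌋₊
  set l := ⌊(n : ℝ) / Real.log n⌋₊
  set s := Real.exp (β ^ 2) - 1
  have hs : 0 ≤ s := sub_nonneg.mpr (Real.one_le_exp (sq_nonneg β))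
  have hLl : L * l ≤ n := Nat.floor_mul_floor_div_le _ _
  let δ (m₁ m₂ : Fin n → Fin 4) (k : ℕ) : ℝ := if pos0 n m₁ k = pos0 n m₂ k then 1 else 0
  calc (1 - (s * R l) ^ (L + 1)) / (1 - s * R l)
      = ∑ x ∈ gapVectors L l, s ^ x.1 * ∏ i, p (2 * x.2 i) 0 := by
        rw [sum_gapVectors_eq_geom_sum L l s fun g => p (2 * g) 0, ← R, geom_sum_eq hσ.ne,
          ← neg_div_neg_eq, neg_sub, neg_sub]
    _ = ∑ x ∈ gapVectors L l,
          s ^ x.1 * E2 n fun m₁ m₂ => ∏ i : Fin x.1, δ m₁ m₂ (Fin.partialSum x.2 i.succ) :=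
        sum_congr rfl fun x hx => by
          rw [E2_prod_meet_eq_prod_p x.2 (sum_le_of_mem_gapVectors hLl hx)]
    _ = E2 n fun m₁ m₂ => ∑ x ∈ gapVectors L l,
          s ^ x.1 * ∏ i : Fin x.1, δ m₁ m₂ (Fin.partialSum x.2 i.succ) := by
        simp only [E2_sum, E2_const_mul]
    _ ≤ E2 n fun m₁ m₂ => ∏ k ∈ Icc 1 n, (1 + s * δ m₁ m₂ k) :=
        E2_mono fun m₁ m₂ => sum_gapVectors_le_prod_one_add hLl hs fun k => by
          unfold δ; split_ifs <;> norm_num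
    _ = _ := by simp only [δ, s, mul_sum, Real.exp_sum, Real.exp_mul_ite_one_zero]

/-- Second-moment lower bound: with `σ² = e^{β²} − 1`, `ℓ = ⌊n/log n⌋` and provided
`σ² R_ℓ < 1`, one has
`E^{⊗2}[exp(β² Σ_{k=1}^n 1{S_k^1=S_k^2})] ≥ (1 − (σ² R_ℓ)^{⌊log n⌋+1})/(1 − σ² R_ℓ)`. -/
theorem second_moment_lower (n : ℕ) (hn : 1 ≤ n) (β : ℝ) (hβ : 0 < β)
    (hσ : (Real.exp (β ^ 2) - 1) * R (Nat.floor ((n : ℝ) / Real.log n)) < 1) :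
    (1 - ((Real.exp (β ^ 2) - 1) * R (Nat.floor ((n : ℝ) / Real.log n)))
          ^ (Nat.floor (Real.log n) + 1)) /
        (1 - (Real.exp (β ^ 2) - 1) * R (Nat.floor ((n : ℝ) / Real.log n))) ≤
      E2 n (fun m₁ m₂ => Real.exp (β ^ 2 * ∑ k ∈ Finset.Icc 1 n,
        if pos0 n m₁ k = pos0 n m₂ k then (1 : ℝ) else 0)) :=
  second_moment_lower_general n β hσ
end

section
/- Let f : [1,T] → [0,∞) be non-increasing with f(1) finite and f(T)=0, and suppose f is differentiable with f'(x) = −(1/x)·1/(1 − c·log(x)/L) for constants 0 < c < 1 and L ≥ log T. Then for every integer j ≥ 1 and v ∈ [1,T]: f(1)^j + ∫_1^v f(x)^j dx ≤ v Σ_{i=0}^j (j!/(j−i)!) (1/(1−c))^i f(v)^{j−i}. -/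
/-!
Put `K = 1/(1-c)` and `S_j(y) = ∑_{i ≤ j} j!/(j-i)! K^i y^(j-i)`. Since `log x ≤ L`, the hypothesis
on `f'` gives `-x f'(x) ≤ K` on `[1,T]`, and `S_j` satisfies `S_j(y) = y^j + K S_j'(y)` with
`S_j' ≥ 0` for `y ≥ 0`. Hence `x ↦ x S_j(f x)` has derivative
`S_j(f x) + x f'(x) S_j'(f x) = f(x)^j + (K + x f'(x)) S_j'(f x) ≥ f(x)^j`, and integrating from
`1` to `v` gives the bound; this is the closed form of the iterated integration by parts.
-/

open Finset intervalIntegral Set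

noncomputable section

def ibpMajorant (j : ℕ) (K y : ℝ) : ℝ :=
  ∑ i ∈ range (j + 1),
    ((Nat.factorial j : ℝ) / (Nat.factorial (j - i) : ℝ)) * K ^ i * y ^ (j - i)

def ibpMajorantDeriv (j : ℕ) (K y : ℝ) : ℝ :=
  ∑ i ∈ range (j + 1),
    ((Nat.factorial j : ℝ) / (Nat.factorial (j - i) : ℝ)) * K ^ i *
      ((j - i : ℕ) * y ^ (j - i - 1))

end

theorem hasDerivAt_ibpMajorant (j : ℕ) (K y : ℝ) :
    HasDerivAt (ibpMajorant j K) (ibpMajorantDeriv j K y) y := by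
  unfold ibpMajorant ibpMajorantDeriv
  exact HasDerivAt.fun_sum fun i _ => (hasDerivAt_pow (j - i) y).const_mul
    ((Nat.factorial j : ℝ) / (Nat.factorial (j - i) : ℝ) * K ^ i)

theorem ibpMajorantDeriv_nonneg (j : ℕ) {K y : ℝ} (hK : 0 ≤ K) (hy : 0 ≤ y) :
    0 ≤ ibpMajorantDeriv j K y :=
  sum_nonneg fun _ _ => by positivity

theorem ibpMajorant_eq_pow_add (j : ℕ) (K y : ℝ) :
    ibpMajorant j K y = y ^ j + K * ibpMajorantDeriv j K y := by
  have hfact : (Nat.factorial j : ℝ) ≠ 0 := by positivity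
  rw [ibpMajorant, ibpMajorantDeriv, sum_range_succ', sum_range_succ, Nat.sub_self,
    Nat.cast_zero, zero_mul, mul_zero, add_zero, mul_sum, Nat.sub_zero, div_self hfact, pow_zero,
    mul_one, one_mul, add_comm]
  refine congrArg _ (sum_congr rfl fun i hi => ?_)
  -- termwise: `j!/(j-i-1)! = (j-i) · j!/(j-i)!` for `i < j`
  obtain ⟨k, hk⟩ : ∃ k, j - i = k + 1 := ⟨j - (i + 1), by grind⟩
  rw [hk, show j - (i + 1) = k by omega, Nat.add_sub_cancel, Nat.factorial_succ]
  push_cast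
  field_simp
  ring

theorem pow_le_ibpMajorant (j : ℕ) {K y : ℝ} (hK : 0 ≤ K) (hy : 0 ≤ y) :
    y ^ j ≤ ibpMajorant j K y := by
  rw [ibpMajorant_eq_pow_add]
  have := ibpMajorantDeriv_nonneg j hK hy
  nlinarith

theorem continuous_ibpMajorant (j : ℕ) (K : ℝ) : Continuous (ibpMajorant j K) :=
  continuous_iff_continuousAt.2 fun y => (hasDerivAt_ibpMajorant j K y).continuousAt

theorem mul_pow_add_integral_pow_le_ibpMajorant {f f' : ℝ → ℝ} {a b K : ℝ} (j : ℕ)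
    (ha : 0 ≤ a) (hab : a ≤ b) (hK : 0 ≤ K) (hf : ContinuousOn f (Icc a b))
    (hf' : ∀ x ∈ Ioo a b, HasDerivAt f (f' x) x) (hf_nonneg : ∀ x ∈ Icc a b, 0 ≤ f x)
    (hf'_bound : ∀ x ∈ Ioo a b, -(x * f' x) ≤ K) :
    a * f a ^ j + ∫ x in a..b, f x ^ j ≤ b * ibpMajorant j K (f b) := by
  have hderiv : ∀ x ∈ Ioo a b, HasDerivAt (fun x => x * ibpMajorant j K (f x))
      (1 * ibpMajorant j K (f x) + x * (ibpMajorantDeriv j K (f x) * f' x)) x := fun x hx =>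
    (hasDerivAt_id x).mul ((hasDerivAt_ibpMajorant j K (f x)).comp x (hf' x hx))
  have hderiv_ge : ∀ x ∈ Ioo a b,
      f x ^ j ≤ 1 * ibpMajorant j K (f x) + x * (ibpMajorantDeriv j K (f x) * f' x) := by
    intro x hx
    have hfx := hf_nonneg x (Ioo_subset_Icc_self hx)
    have hgap := mul_nonneg (ibpMajorantDeriv_nonneg j hK hfx)
      (by linarith [hf'_bound x hx] : 0 ≤ K + x * f' x)
    rw [ibpMajorant_eq_pow_add]
    linarith
  have hintegral := integral_le_sub_of_hasDeriv_right_of_le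
    (g := fun x => x * ibpMajorant j K (f x)) (φ := fun x => f x ^ j) hab
    (continuousOn_id.fun_mul ((continuous_ibpMajorant j K).comp_continuousOn hf))
    (fun x hx => (hderiv x hx).hasDerivWithinAt) (hf.fun_pow j).integrableOn_Icc hderiv_ge
  have hleft := mul_le_mul_of_nonneg_left
    (pow_le_ibpMajorant j hK (hf_nonneg a (left_mem_Icc.2 hab))) ha
  linarith

theorem one_div_one_sub_mul_log_div_le {c L x : ℝ} (hc0 : 0 ≤ c) (hc1 : c < 1) (hx : 1 ≤ x)
    (hL : Real.log x ≤ L) : 1 / (1 - c * Real.log x / L) ≤ 1 / (1 - c) := by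
  have hlog := Real.log_nonneg hx
  refine one_div_le_one_div_of_le (sub_pos.2 hc1) (sub_le_sub_left ?_ 1)
  exact div_le_of_le_mul₀ (hlog.trans hL) hc0 (mul_le_mul_of_nonneg_left hL hc0)

theorem iterated_ibp_bound_general (T c L : ℝ) (hc0 : 0 < c) (hc1 : c < 1)
    (hL : Real.log T ≤ L)
    (f : ℝ → ℝ)
    (hnonneg : ∀ x ∈ Set.Icc (1 : ℝ) T, 0 ≤ f x)
    (hderiv : ∀ x ∈ Set.Icc (1 : ℝ) T,
      HasDerivAt f (-(1 / x) * (1 / (1 - c * Real.log x / L))) x)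
    (j : ℕ) (v : ℝ) (hv : v ∈ Set.Icc (1 : ℝ) T) :
    f 1 ^ j + ∫ x in (1 : ℝ)..v, f x ^ j ≤
      v * ∑ i ∈ Finset.range (j + 1),
        ((Nat.factorial j : ℝ) / (Nat.factorial (j - i) : ℝ)) *
          (1 / (1 - c)) ^ i * f v ^ (j - i) := by
  have hsub : Icc 1 v ⊆ Icc 1 T := Icc_subset_Icc_right hv.2
  have hbound : ∀ x ∈ Ioo 1 v,
      -(x * (-(1 / x) * (1 / (1 - c * Real.log x / L)))) ≤ 1 / (1 - c) := by
    intro x hx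
    have hx0 : x ≠ 0 := by linarith [hx.1]
    rw [neg_mul, mul_neg, neg_neg, ← mul_assoc, mul_one_div_cancel hx0, one_mul]
    exact one_div_one_sub_mul_log_div_le hc0.le hc1 hx.1.le
      ((Real.log_le_log (by linarith [hx.1]) (hx.2.le.trans hv.2)).trans hL)
  simpa only [one_mul, ibpMajorant] using
    mul_pow_add_integral_pow_le_ibpMajorant j zero_le_one hv.1
      (one_div_nonneg.2 (sub_nonneg.2 hc1.le))
      (fun x hx => (hderiv x (hsub hx)).continuousAt.continuousWithinAt)
      (fun x hx => hderiv x (hsub (Ioo_subset_Icc_self hx))) (fun x hx => hnonneg x (hsub hx))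
      hbound

/-- Iterated integration-by-parts bound: if `f : [1,T] → [0,∞)` is non-increasing with
`f(T) = 0` and `f'(x) = −(1/x)·1/(1 − c log x / L)` on `[1,T]` (`0 < c < 1`,
`L ≥ log T`), then for every `j ≥ 1` and `v ∈ [1,T]`,
`f(1)^j + ∫_1^v f(x)^j dx ≤ v Σ_{i=0}^j (j!/(j−i)!) (1/(1−c))^i f(v)^{j−i}`. -/
theorem iterated_ibp_bound (T c L : ℝ) (hT : 1 ≤ T) (hc0 : 0 < c) (hc1 : c < 1)
    (hL : Real.log T ≤ L)
    (f : ℝ → ℝ)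
    (hmono : AntitoneOn f (Set.Icc 1 T))
    (hnonneg : ∀ x ∈ Set.Icc (1 : ℝ) T, 0 ≤ f x)
    (hfT : f T = 0)
    (hderiv : ∀ x ∈ Set.Icc (1 : ℝ) T,
      HasDerivAt f (-(1 / x) * (1 / (1 - c * Real.log x / L))) x)
    (j : ℕ) (hj : 1 ≤ j) (v : ℝ) (hv : v ∈ Set.Icc (1 : ℝ) T) :
    f 1 ^ j + ∫ x in (1 : ℝ)..v, f x ^ j ≤
      v * ∑ i ∈ Finset.range (j + 1),
        ((Nat.factorial j : ℝ) / (Nat.factorial (j - i) : ℝ)) *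
          (1 / (1 - c)) ^ i * f v ^ (j - i) :=
  iterated_ibp_bound_general T c L hc0 hc1 hL f hnonneg hderiv j v hv
end

section
/- Define recursively c_0^1 = 1, c_1^1 = 2, c_i^{k+1} = c_i^k + 2γ_k Σ_{j=0}^{i−1} c_j^k for 0 ≤ i ≤ k+1 (with c_i^k = 0 for i > k), where γ_k ∈ {0,1} for each k. Then for all k ≥ 1 and 0 ≤ i ≤ k: c_i^k ≤ 3^i Π_{r=1}^{k−1} (1 + γ_r). -/
/-!
Induction on `k`, for all `i` at once (the bound is trivial where `c_i^k = 0`). Since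
`2 Σ_{j<i} 3^j = 3^i - 1`, the step `c_i^k ↦ c_i^k + 2γ_k Σ_{j<i} c_j^k` multiplies the bound
`3^i P` by at most `1 + γ_k`.
-/

open Finset

lemma two_mul_sum_range_le_of_le_three_pow {a : ℕ → ℝ} {P : ℝ} (ha : ∀ j, a j ≤ 3 ^ j * P)
    (i : ℕ) : 2 * ∑ j ∈ range i, a j ≤ (3 ^ i - 1) * P := by
  have hgeom : 2 * ∑ j ∈ range i, (3 : ℝ) ^ j = 3 ^ i - 1 := by
    rw [mul_comm, show (2 : ℝ) = 3 - 1 by norm_num, geom_sum_mul]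
  calc 2 * ∑ j ∈ range i, a j ≤ 2 * ∑ j ∈ range i, 3 ^ j * P := by
        gcongr with j; exact ha j
    _ = (3 ^ i - 1) * P := by rw [← sum_mul, ← mul_assoc, hgeom]

lemma add_two_mul_mul_le_three_pow_mul {x s g P : ℝ} {i : ℕ} (hx : x ≤ 3 ^ i * P)
    (hs : 2 * s ≤ (3 ^ i - 1) * P) (hg : 0 ≤ g) (hP : 0 ≤ P) :
    x + 2 * g * s ≤ 3 ^ i * (P * (1 + g)) := by
  nlinarith [mul_le_mul_of_nonneg_left hs hg, mul_nonneg hg hP]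

lemma coeff_le_three_pow_mul_prod {c : ℕ → ℕ → ℝ} {γ : ℕ → ℝ} (hγ : ∀ k, 0 ≤ γ k)
    (h10 : c 1 0 = 1) (h11 : c 1 1 = 2) (hzero : ∀ k i, k < i → c k i = 0)
    (hrec : ∀ k, 1 ≤ k → ∀ i, i ≤ k + 1 →
      c (k + 1) i = c k i + 2 * γ k * ∑ j ∈ range i, c k j) :
    ∀ m i, c (m + 1) i ≤ 3 ^ i * ∏ r ∈ Icc 1 m, (1 + γ r) := by
  intro m
  induction m with
  | zero =>
    rintro (_ | _ | i)
    · simp [h10]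
    · norm_num [h11]
    · simp [hzero 1 (i + 2) (by omega)]
  | succ m ih =>
    intro i
    have hP : 0 ≤ ∏ r ∈ Icc 1 m, (1 + γ r) := prod_nonneg fun r _ => by linarith [hγ r]
    rcases le_or_gt i (m + 2) with hi | hi
    · rw [hrec (m + 1) (by omega) i hi, prod_Icc_succ_top (by omega)]
      exact add_two_mul_mul_le_three_pow_mul (ih i)
        (two_mul_sum_range_le_of_le_three_pow ih i) (hγ _) hP
    · rw [hzero _ _ hi, prod_Icc_succ_top (by omega)]
      exact mul_nonneg (by positivity) (mul_nonneg hP (by linarith [hγ (m + 1)]))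

/-- Bound on the recursively defined coefficients `c_i^k`:
`c_0^1 = 1`, `c_1^1 = 2`, `c_i^{k+1} = c_i^k + 2 γ_k Σ_{j<i} c_j^k`, `c_i^k = 0` for
`i > k`, with `γ_k ∈ {0,1}`. Then `c_i^k ≤ 3^i Π_{r=1}^{k−1} (1 + γ_r)` for all
`k ≥ 1` and `i ≤ k`. -/
theorem coeff_bound (c : ℕ → ℕ → ℝ) (γ : ℕ → ℝ)
    (hγ : ∀ k, γ k = 0 ∨ γ k = 1)
    (h10 : c 1 0 = 1) (h11 : c 1 1 = 2)
    (hzero : ∀ k i, k < i → c k i = 0)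
    (hrec : ∀ k, 1 ≤ k → ∀ i, i ≤ k + 1 →
      c (k + 1) i = c k i + 2 * γ k * ∑ j ∈ Finset.range i, c k j) :
    ∀ k, 1 ≤ k → ∀ i, i ≤ k →
      c k i ≤ 3 ^ i * ∏ r ∈ Finset.Icc 1 (k - 1), (1 + γ r) := by
  have hγ_nonneg : ∀ k, 0 ≤ γ k := fun k => by rcases hγ k with h | h <;> simp [h]
  rintro (_ | m) hk i -
  · omega
  · simpa using coeff_le_three_pow_mul_prod hγ_nonneg h10 h11 hzero hrec m i
end
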